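/- If X solves the ARE A^T X + X A + C^T C - X M X = 0 with X = X^T ⪰ 0 and A - M X Hurwitz, and X̄ = X̄^T satisfies the same ARE with residue R(X̄) = A^T X̄ + X̄ A + C^T C - X̄ M X̄ ⪰ 0 and M ⪰ 0 and A - M X̄ Hurwitz, then X̄ ⪯ X. -/

import Mathlib

/-!
Writing `Δ = X - X̄`, the two Riccati residues give the Lyapunov equation
`(A - M X)ᵀ Δ + Δ (A - M X) = -(R(X̄) + Δ M Δ)` with a positive semidefinite right-hand side
`Q`. For a Hurwitz matrix `F` and `Fᵀ Δ + Δ F = -Q`, the function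
`φ t = (e^{tF} v)ᵀ Δ (e^{tF} v)` has derivative `-(e^{tF} v)ᵀ Q (e^{tF} v) ≤ 0` and tends to `0`,
so `vᵀ Δ v = φ 0 ≥ 0`. The decay `e^{tF} v → 0` is checked on the generalized eigenspaces of the
complexification of `F`, on which `e^{tF}` acts as `e^{tμ}` times a polynomial in `t`.
-/

open Matrix NormedSpace Filter Topology
open scoped Complex

attribute [local instance] Matrix.linftyOpNormedRing Matrix.linftyOpNormedAlgebra

theorem Complex.tendsto_exp_mul_mul_pow_atTop {μ : ℂ} (hμ : μ.re < 0) (j : ℕ) :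
    Tendsto (fun t : ℝ => cexp (t * μ) * (t : ℂ) ^ j) atTop (𝓝 0) := by
  rw [tendsto_zero_iff_norm_tendsto_zero]
  refine (tendsto_rpow_mul_exp_neg_mul_atTop_nhds_zero j (-μ.re) (neg_pos.mpr hμ)).congr' ?_
  filter_upwards [eventually_ge_atTop 0] with t ht
  simp [Complex.norm_exp, abs_of_nonneg ht, mul_comm]

namespace Matrix

variable {ι : Type*} [Fintype ι]

def riccatiResidue {R : Type*} [CommRing R] (A M Q X : Matrix ι ι R) : Matrix ι ι R :=
  Aᵀ * X + X * A + Q - X * M * X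

theorem transpose_mul_sub_add_sub_mul_eq_riccatiResidue_sub {R : Type*} [CommRing R]
    {A M Q X : Matrix ι ι R} (hX : Xᵀ = X) (hM : Mᵀ = M) (Y : Matrix ι ι R) :
    (A - M * X)ᵀ * (X - Y) + (X - Y) * (A - M * X) =
      riccatiResidue A M Q X - riccatiResidue A M Q Y - (X - Y) * M * (X - Y) := by
  rw [transpose_sub, transpose_mul, hX, hM, riccatiResidue, riccatiResidue]
  noncomm_ring

theorem dotProduct_mulVec_transpose_mul_mul {R m n : Type*} [CommSemiring R] [Fintype m]
    [Fintype n] (E : Matrix m n R) (Δ : Matrix m m R) (v : n → R) :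
    v ⬝ᵥ ((Eᵀ * Δ * E) *ᵥ v) = (E *ᵥ v) ⬝ᵥ (Δ *ᵥ (E *ᵥ v)) := by
  rw [← mulVec_mulVec, ← mulVec_mulVec, dotProduct_mulVec, vecMul_transpose]

variable [DecidableEq ι]

theorem exp_mulVec_eq_sum_of_pow_mulVec_eq_zero {𝕂 : Type*} [RCLike 𝕂] {N : Matrix ι ι 𝕂}
    {v : ι → 𝕂} {k : ℕ} (hk : N ^ k *ᵥ v = 0) :
    exp N *ᵥ v = ∑ j ∈ Finset.range k, (j.factorial⁻¹ : 𝕂) • (N ^ j *ᵥ v) := by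
  let L : Matrix ι ι 𝕂 →L[𝕂] ι → 𝕂 :=
    LinearMap.toContinuousLinearMap ((mulVecBilin 𝕂 𝕂).flip v)
  have hseries : exp N *ᵥ v = ∑' j, (j.factorial⁻¹ : 𝕂) • (N ^ j *ᵥ v) := by
    rw [exp_eq_tsum 𝕂]
    simpa [L, smul_mulVec] using L.map_tsum (expSeries_summable' (𝕂 := 𝕂) N)
  rw [hseries]
  refine tsum_eq_sum fun j hj => ?_
  obtain ⟨i, rfl⟩ := Nat.exists_eq_add_of_le' (not_lt.mp (Finset.mem_range.not.mp hj))
  rw [pow_add, ← mulVec_mulVec, hk, mulVec_zero, smul_zero]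

theorem exp_algebraMap (c : ℂ) :
    exp (algebraMap ℂ (Matrix ι ι ℂ) c) = algebraMap ℂ _ (cexp c) := by
  rw [algebraMap_eq_diagonal, algebraMap_eq_diagonal, exp_diagonal, Pi.exp_def]
  simp [Complex.exp_eq_exp_ℂ]

theorem exp_smul_mulVec_eq_sum {G : Matrix ι ι ℂ} {μ : ℂ} {k : ℕ} {v : ι → ℂ}
    (hv : (G - μ • 1) ^ k *ᵥ v = 0) (t : ℝ) :
    exp ((t : ℂ) • G) *ᵥ v = ∑ j ∈ Finset.range k,
      (cexp (t * μ) * (t : ℂ) ^ j * (j.factorial⁻¹ : ℂ)) • ((G - μ • 1) ^ j *ᵥ v) := by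
  set N := G - μ • 1
  have hsplit : (t : ℂ) • G = algebraMap ℂ _ (t * μ) + (t : ℂ) • N := by
    rw [Algebra.algebraMap_eq_smul_one, smul_sub, smul_smul]; abel
  have htN : ((t : ℂ) • N) ^ k *ᵥ v = 0 := by rw [smul_pow, smul_mulVec, hv, smul_zero]
  rw [hsplit, exp_add_of_commute _ _ (Algebra.commute_algebraMap_left _ _), exp_algebraMap,
    ← Algebra.smul_def, smul_mulVec, exp_mulVec_eq_sum_of_pow_mulVec_eq_zero htN,
    Finset.smul_sum]
  refine Finset.sum_congr rfl fun j _ => ?_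
  rw [smul_pow, smul_mulVec, smul_smul, smul_smul, mul_right_comm (_ : ℂ)] 

theorem tendsto_exp_smul_mulVec_of_pow_sub_smul_mulVec_eq_zero {G : Matrix ι ι ℂ} {μ : ℂ}
    (hμ : μ.re < 0) {k : ℕ} {v : ι → ℂ} (hv : (G - μ • 1) ^ k *ᵥ v = 0) :
    Tendsto (fun t : ℝ => exp ((t : ℂ) • G) *ᵥ v) atTop (𝓝 0) := by
  simp_rw [exp_smul_mulVec_eq_sum hv]
  simpa using tendsto_finsetSum _ fun j _ =>
    ((Complex.tendsto_exp_mul_mul_pow_atTop hμ j).mul_const _).smul_const ((G - μ • 1) ^ j *ᵥ v)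

theorem tendsto_exp_smul_mulVec_of_forall_re_neg {G : Matrix ι ι ℂ}
    (hG : ∀ μ ∈ spectrum ℂ G, μ.re < 0) (v : ι → ℂ) :
    Tendsto (fun t : ℝ => exp ((t : ℂ) • G) *ᵥ v) atTop (𝓝 0) := by
  let decaying : Submodule ℂ (ι → ℂ) :=
    { carrier := {w | Tendsto (fun t : ℝ => exp ((t : ℂ) • G) *ᵥ w) atTop (𝓝 0)}
      add_mem' := fun h₁ h₂ => by simpa [mulVec_add] using h₁.add h₂
      zero_mem' := by simp
      smul_mem' := fun c w h => by simpa [mulVec_smul] using h.const_smul c }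
  suffices ⊤ ≤ decaying from this Submodule.mem_top
  rw [← Module.End.iSup_maxGenEigenspace_eq_top (toLinAlgEquiv' G)]
  refine iSup_le fun μ w hw => ?_
  obtain ⟨k, hk⟩ := (Module.End.mem_maxGenEigenspace _ μ w).mp hw
  replace hk : (G - μ • 1) ^ k *ᵥ w = 0 := by
    rwa [← map_one toLinAlgEquiv', ← map_smul, ← map_sub, ← map_pow, toLinAlgEquiv'_apply] at hk
  by_cases hμ : μ ∈ spectrum ℂ G
  · exact tendsto_exp_smul_mulVec_of_pow_sub_smul_mulVec_eq_zero (hG μ hμ) hk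
  · have hunit : IsUnit ((G - μ • 1) ^ k) := by
      rw [spectrum.notMem_iff, ← IsUnit.neg_iff, neg_sub, Algebra.algebraMap_eq_smul_one] at hμ
      exact hμ.pow k
    rw [← mulVec_zero ((G - μ • 1) ^ k)] at hk
    rw [mulVec_injective_of_isUnit hunit hk]
    exact decaying.zero_mem

theorem map_exp_ofReal (F : Matrix ι ι ℝ) :
    (exp F).map Complex.ofReal = exp (F.map Complex.ofReal) :=
  map_exp Complex.ofRealHom.mapMatrix (continuous_id.matrix_map Complex.continuous_ofReal) F

def IsHurwitz (F : Matrix ι ι ℝ) : Prop :=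
  ∀ μ ∈ spectrum ℂ (F.map Complex.ofReal), μ.re < 0

theorem IsHurwitz.tendsto_exp_smul_mulVec {F : Matrix ι ι ℝ} (hF : F.IsHurwitz) (v : ι → ℝ) :
    Tendsto (fun t : ℝ => exp (t • F) *ᵥ v) atTop (𝓝 0) := by
  have hre : Continuous fun u : ι → ℂ => fun i => (u i).re := by fun_prop
  have hcomplexify : ∀ t : ℝ, exp (t • F) *ᵥ v =
      fun i => ((exp ((t : ℂ) • F.map Complex.ofReal) *ᵥ fun j => (v j : ℂ)) i).re := by
    intro t
    ext i
    have hsmul : (t : ℂ) • F.map Complex.ofReal = (t • F).map Complex.ofReal := by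
      ext; simp
    rw [hsmul, ← map_exp_ofReal]
    exact congrArg Complex.re (RingHom.map_mulVec Complex.ofRealHom _ v i)
  rw [funext hcomplexify]
  exact (hre.tendsto 0).comp (tendsto_exp_smul_mulVec_of_forall_re_neg hF fun j => (v j : ℂ))

theorem hasDerivAt_exp_smul_transpose_mul_mul_exp_smul (F Δ : Matrix ι ι ℝ) (t : ℝ) :
    HasDerivAt (fun s : ℝ => exp (s • Fᵀ) * Δ * exp (s • F))
      (exp (t • Fᵀ) * (Fᵀ * Δ + Δ * F) * exp (t • F)) t := by
  refine (((hasDerivAt_exp_smul_const Fᵀ t).mul_const Δ).mul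
    (hasDerivAt_exp_smul_const' F t)).congr_deriv ?_
  simp only [mul_add, add_mul, mul_assoc]
  -- the two sides differ only in the (definitionally equal) normed and plain matrix instances
  rfl

theorem IsHurwitz.posSemidef_of_lyapunov {F Δ Q : Matrix ι ι ℝ} (hF : F.IsHurwitz)
    (hΔ : Δ.IsHermitian) (hQ : Q.PosSemidef) (h : Fᵀ * Δ + Δ * F = -Q) : Δ.PosSemidef := by
  refine PosSemidef.of_dotProduct_mulVec_nonneg hΔ fun v => ?_
  let L : Matrix ι ι ℝ →L[ℝ] ℝ :=
    LinearMap.toContinuousLinearMap (dotProductBilin ℝ ℝ v ∘ₗ (mulVecBilin ℝ ℝ).flip v)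
  have htranspose : ∀ t : ℝ, exp (t • Fᵀ) = (exp (t • F))ᵀ := fun t => by
    rw [← exp_transpose, transpose_smul]
  let φ : ℝ → ℝ := fun t => v ⬝ᵥ ((exp (t • Fᵀ) * Δ * exp (t • F)) *ᵥ v)
  have hφ : ∀ t, HasDerivAt φ (-((exp (t • F) *ᵥ v) ⬝ᵥ (Q *ᵥ (exp (t • F) *ᵥ v)))) t := by
    intro t
    refine (L.hasFDerivAt.comp_hasDerivAt t
      (hasDerivAt_exp_smul_transpose_mul_mul_exp_smul F Δ t)).congr_deriv ?_
    change v ⬝ᵥ ((exp (t • Fᵀ) * (Fᵀ * Δ + Δ * F) * exp (t • F)) *ᵥ v) = _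
    rw [h, htranspose, mul_neg, neg_mul, neg_mulVec, dotProduct_neg,
      dotProduct_mulVec_transpose_mul_mul]
  have hanti : Antitone φ := antitone_of_deriv_nonpos (fun t => (hφ t).differentiableAt)
    fun t => (hφ t).deriv ▸ neg_nonpos.mpr (hQ.dotProduct_mulVec_nonneg _)
  have hlim : Tendsto φ atTop (𝓝 0) := by
    have hq : Continuous fun u : ι → ℝ => u ⬝ᵥ (Δ *ᵥ u) := by fun_prop
    simp only [φ, htranspose, dotProduct_mulVec_transpose_mul_mul]
    simpa only [mulVec_zero, dotProduct_zero, Function.comp_def] using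
      (hq.tendsto 0).comp (hF.tendsto_exp_smul_mulVec v)
  simpa [φ] using hanti.le_of_tendsto hlim 0

end Matrix

theorem riccati_comparison_general
    (n m : ℕ)
    (A M : Matrix (Fin n) (Fin n) ℝ) (hM : M.PosSemidef)
    (C : Matrix (Fin m) (Fin n) ℝ)
    (X : Matrix (Fin n) (Fin n) ℝ) (hX : X.PosSemidef)
    (hareX : Aᵀ * X + X * A + Cᵀ * C - X * M * X = 0)
    (hhurX : ∀ μ ∈ spectrum ℂ ((A - M * X).map Complex.ofReal), μ.re < 0)
    (Xbar : Matrix (Fin n) (Fin n) ℝ) (hXbar : Xbarᵀ = Xbar)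
    (hres : (Aᵀ * Xbar + Xbar * A + Cᵀ * C - Xbar * M * Xbar).PosSemidef) :
    (X - Xbar).PosSemidef := by
  have hXsymm : Xᵀ = X := by simpa using hX.isHermitian.eq
  have hΔ : (X - Xbar).IsHermitian :=
    hX.isHermitian.sub (by simpa [IsHermitian] using hXbar)
  have hΔMΔ : ((X - Xbar) * M * (X - Xbar)).PosSemidef := by
    simpa only [hΔ.eq] using hM.conjTranspose_mul_mul_same (X - Xbar)
  refine IsHurwitz.posSemidef_of_lyapunov hhurX hΔ (hres.add hΔMΔ) ?_
  rw [transpose_mul_sub_add_sub_mul_eq_riccatiResidue_sub hXsymm (by simpa using hM.isHermitian.eq),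
    show riccatiResidue A M (Cᵀ * C) X = 0 from hareX, riccatiResidue]
  abel

/-- Comparison lemma for Riccati equations (Lemma 2): if `X = Xᵀ ⪰ 0` is the
stabilizing solution of `Aᵀ X + X A + Cᵀ C - X M X = 0` (with `A - M X` Hurwitz),
`M ⪰ 0`, and `X̄ = X̄ᵀ` has PSD residue `Aᵀ X̄ + X̄ A + Cᵀ C - X̄ M X̄ ⪰ 0` with
`A - M X̄` Hurwitz, then `X̄ ⪯ X`. -/
theorem riccati_comparison
    (n m : ℕ)
    (A M : Matrix (Fin n) (Fin n) ℝ) (hM : M.PosSemidef)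
    (C : Matrix (Fin m) (Fin n) ℝ)
    (X : Matrix (Fin n) (Fin n) ℝ) (hX : X.PosSemidef)
    (hareX : Aᵀ * X + X * A + Cᵀ * C - X * M * X = 0)
    (hhurX : ∀ μ ∈ spectrum ℂ ((A - M * X).map Complex.ofReal), μ.re < 0)
    (Xbar : Matrix (Fin n) (Fin n) ℝ) (hXbar : Xbarᵀ = Xbar)
    (hres : (Aᵀ * Xbar + Xbar * A + Cᵀ * C - Xbar * M * Xbar).PosSemidef)
    (hhurXbar : ∀ μ ∈ spectrum ℂ ((A - M * Xbar).map Complex.ofReal), μ.re < 0) :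
    (X - Xbar).PosSemidef :=
  riccati_comparison_general n m A M hM C X hX hareX hhurX Xbar hXbar hres
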